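/- Let n ≥ 3, let K ⊆ ℝⁿ be a proper subdual cone, let A ∈ ℝ^{n×n} be symmetric, and let {v¹, …, vⁿ} be an orthonormal system of eigenvectors of A with A vⁱ = λᵢ vⁱ and λ₁ < λ₂ ≤ ⋯ ≤ λₙ. Set θᵢ = (λᵢ − λ₂)/(λ₂ − λ₁) for i = 2, …, n and L_{λ₂} = {x ∈ ℝⁿ : ⟨v¹, x⟩ ≥ √(θ₂⟨v², x⟩² + ⋯ + θₙ⟨vⁿ, x⟩²)}. Suppose λ₂ ≤ (λ₁ + λ₃)/2 and that λ₂Iₙ − A is K-copositive. If K ∩ (−L_{λ₂}) = {0} or K ∩ L_{λ₂} = {0}, then the sublevel set [φ_A ≤ c] = {x ∈ int(K) : ⟨Ax, x⟩ ≤ c‖x‖²} is convex for every c ∈ ℝ (i.e., q_A is spherically quasi-convex). -/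

import Mathlib

open scoped RealInnerProductSpace

/-- The quadratic form `x ↦ ⟨A x, x⟩` associated with a matrix `A`. -/
noncomputable def quadForm {n : ℕ} (A : Matrix (Fin n) (Fin n) ℝ)
    (x : EuclideanSpace ℝ (Fin n)) : ℝ :=
  ⟪Matrix.toEuclideanLin A x, x⟫

/-- `K` is a cone: closed under multiplication by positive scalars. -/
def IsCone {n : ℕ} (K : Set (EuclideanSpace ℝ (Fin n))) : Prop :=
  ∀ ⦃t : ℝ⦄, 0 < t → ∀ ⦃x⦄, x ∈ K → t • x ∈ K

/-- A proper cone: a pointed closed convex cone with nonempty interior. -/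
def IsProperCone {n : ℕ} (K : Set (EuclideanSpace ℝ (Fin n))) : Prop :=
  IsCone K ∧ Convex ℝ K ∧ IsClosed K ∧ K ∩ (-K) ⊆ {0} ∧ (interior K).Nonempty

/-- The dual cone `K* = {u : ⟨u, y⟩ ≥ 0 for all y ∈ K}`. -/
def dualCone {n : ℕ} (K : Set (EuclideanSpace ℝ (Fin n))) : Set (EuclideanSpace ℝ (Fin n)) :=
  {u | ∀ y ∈ K, 0 ≤ ⟪u, y⟫}

/-- The sublevel set `[φ_A ≤ c] = {x ∈ int K : ⟨A x, x⟩ ≤ c ‖x‖²}`. -/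
noncomputable def sublevel {n : ℕ} (A : Matrix (Fin n) (Fin n) ℝ)
    (K : Set (EuclideanSpace ℝ (Fin n))) (c : ℝ) : Set (EuclideanSpace ℝ (Fin n)) :=
  {x ∈ interior K | quadForm A x ≤ c * ‖x‖ ^ 2}

/-- The elliptic cone `L = {x : √(∑_{i≥2} θᵢ ⟨vⁱ, x⟩²) ≤ ⟨v¹, x⟩}`. -/
noncomputable def ellipCone {n : ℕ} [NeZero n]
    (v : Fin n → EuclideanSpace ℝ (Fin n)) (θ : Fin n → ℝ) :
    Set (EuclideanSpace ℝ (Fin n)) :=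
  {x | Real.sqrt (∑ i ∈ Finset.univ.erase 0, θ i * ⟪v i, x⟫ ^ 2) ≤ ⟪v 0, x⟫}

/-!
In the coordinates `yᵢ = ⟪v i, x⟫` one has `q_A(x) - c‖x‖² = ∑ (lam i - c) yᵢ²`.
For `c ≥ lam 1`, copositivity of `lam 1 • 1 - A` makes `[φ_A ≤ c]` all of `int K`.
For `c ≤ lam 1` every weight except `lam 0 - c` is nonnegative, so
`{∑ (lam i - c) yᵢ² ≤ 0, y₀ ≥ 0}` is a second-order cone, hence convex. Copositivity also puts
every `x ∈ K` in `L ∪ -L`, so `K ∩ -L = {0}` forces `y₀ ≥ 0` on `K`, and the sublevel set is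
`int K` intersected with that cone. The alternative `K ∩ L = {0}` is the same one for `-K`.
-/

lemma Real.sq_sqrt_sub_sq_sqrt_neg (t : ℝ) : √t ^ 2 - √(-t) ^ 2 = t := by
  rcases le_total 0 t with ht | ht
  · rw [Real.sq_sqrt ht, Real.sqrt_eq_zero'.2 (neg_nonpos.2 ht)]; ring
  · rw [Real.sqrt_eq_zero'.2 ht, Real.sq_sqrt (neg_nonneg.2 ht)]; ring

lemma convex_setOf_sum_mul_sq_nonpos {ι E : Type*} [Fintype ι] [AddCommGroup E] [Module ℝ E]
    {w : ι → ℝ} {i₀ : ι} (hw : ∀ i ≠ i₀, 0 ≤ w i) (f : ι → E →ₗ[ℝ] ℝ) :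
    Convex ℝ {x | ∑ i, w i * f i x ^ 2 ≤ 0 ∧ 0 ≤ f i₀ x} := by
  let W : E →ₗ[ℝ] EuclideanSpace ℝ ι :=
    (WithLp.linearEquiv 2 ℝ (ι → ℝ)).symm.toLinearMap ∘ₗ LinearMap.pi fun i => √(w i) • f i
  set a := √(-w i₀)
  -- `√` vanishes on negatives, so `w i = √(w i) ^ 2 - √(-w i) ^ 2` with the last term only at `i₀`.
  have hW : ∀ x, ∑ i, w i * f i x ^ 2 = ‖W x‖ ^ 2 - (a * f i₀ x) ^ 2 := by
    intro x
    have hWx : ∀ i, W x i = √(w i) * f i x := fun i => rfl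
    have hterm : ∀ i, w i * f i x ^ 2 = W x i ^ 2 - (√(-w i) * f i x) ^ 2 := fun i => by
      rw [hWx, mul_pow, mul_pow, ← sub_mul, Real.sq_sqrt_sub_sq_sqrt_neg]
    rw [Finset.sum_congr rfl fun i _ => hterm i, Finset.sum_sub_distrib,
      ← EuclideanSpace.real_norm_sq_eq, Finset.sum_eq_single i₀ (fun i _ hi => ?_) (by simp)]
    rw [Real.sqrt_eq_zero'.2 (neg_nonpos.2 (hw i hi)), zero_mul, zero_pow two_ne_zero]
  have hset : {x | ∑ i, w i * f i x ^ 2 ≤ 0 ∧ 0 ≤ f i₀ x}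
      = {x | ‖W x‖ - a * f i₀ x ≤ 0} ∩ {x | 0 ≤ f i₀ x} := by
    ext x
    simp only [Set.mem_ofPred_eq, Set.mem_inter_iff, hW, sub_nonpos, and_congr_left_iff]
    intro hx
    exact sq_le_sq₀ (norm_nonneg _) (mul_nonneg (Real.sqrt_nonneg _) hx)
  rw [hset]
  refine Convex.inter ?_ ?_
  · simpa using (((convexOn_norm convex_univ).comp_linearMap W).sub
      ((a • f i₀).concaveOn convex_univ)).convex_le 0
  · simpa using ((f i₀).concaveOn convex_univ).convex_ge 0

namespace OrthonormalBasis

variable {ι E : Type*} [Fintype ι] [NormedAddCommGroup E] [InnerProductSpace ℝ E]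

lemma inner_map_self_eq_sum (b : OrthonormalBasis ι ℝ E) {T : E →ₗ[ℝ] E} {μ : ι → ℝ}
    (hT : ∀ i, T (b i) = μ i • b i) (x : E) : ⟪T x, x⟫ = ∑ i, μ i * ⟪b i, x⟫ ^ 2 := by
  have hTx : T x = ∑ i, (μ i * ⟪b i, x⟫) • b i := by
    conv_lhs => rw [← b.sum_repr' x]
    simp only [map_sum, map_smul, hT, smul_smul, mul_comm]
  simp only [hTx, sum_inner, real_inner_smul_left, sq, mul_assoc]

lemma inner_map_self_sub_mul_norm_sq (b : OrthonormalBasis ι ℝ E) {T : E →ₗ[ℝ] E} {μ : ι → ℝ}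
    (hT : ∀ i, T (b i) = μ i • b i) (c : ℝ) (x : E) :
    ⟪T x, x⟫ - c * ‖x‖ ^ 2 = ∑ i, (μ i - c) * ⟪b i, x⟫ ^ 2 := by
  simp only [b.inner_map_self_eq_sum hT, ← b.sum_sq_inner_right x, Finset.mul_sum,
    ← Finset.sum_sub_distrib, sub_mul]

end OrthonormalBasis

lemma quadForm_neg {n : ℕ} (A : Matrix (Fin n) (Fin n) ℝ) (x : EuclideanSpace ℝ (Fin n)) :
    quadForm A (-x) = quadForm A x := by
  simp only [quadForm, map_neg, inner_neg_neg]

lemma quadForm_smul_one_sub {n : ℕ} (A : Matrix (Fin n) (Fin n) ℝ) (t : ℝ)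
    (x : EuclideanSpace ℝ (Fin n)) :
    quadForm (t • (1 : Matrix (Fin n) (Fin n) ℝ) - A) x = t * ‖x‖ ^ 2 - quadForm A x := by
  have h : Matrix.toEuclideanLin (t • (1 : Matrix (Fin n) (Fin n) ℝ) - A) x
      = t • x - Matrix.toEuclideanLin A x := by simp
  rw [quadForm, h, inner_sub_left, real_inner_smul_left, real_inner_self_eq_norm_sq, quadForm]

lemma sublevel_neg {n : ℕ} (A : Matrix (Fin n) (Fin n) ℝ) (K : Set (EuclideanSpace ℝ (Fin n)))
    (c : ℝ) : sublevel A (-K) c = -sublevel A K c := by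
  ext x
  have hint : interior (-K) = -interior K := ((Homeomorph.neg _).preimage_interior K).symm
  simp [sublevel, hint, quadForm_neg]

lemma neg_mem_neg_ellipCone {n : ℕ} [NeZero n] (v : Fin n → EuclideanSpace ℝ (Fin n))
    (θ : Fin n → ℝ) {x : EuclideanSpace ℝ (Fin n)}
    (hx : ∑ i ∈ Finset.univ.erase 0, θ i * ⟪v i, x⟫ ^ 2 ≤ ⟪v 0, x⟫ ^ 2) (h0 : ⟪v 0, x⟫ ≤ 0) :
    x ∈ -ellipCone v θ := by
  simp only [Set.mem_neg, ellipCone, Set.mem_ofPred_eq, inner_neg_right, neg_sq]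
  calc √(∑ i ∈ Finset.univ.erase 0, θ i * ⟪v i, x⟫ ^ 2) ≤ √(⟪v 0, x⟫ ^ 2) := Real.sqrt_le_sqrt hx
    _ = -⟪v 0, x⟫ := by rw [Real.sqrt_sq_eq_abs, abs_of_nonpos h0]

lemma quadForm_sub_mul_norm_sq_eq_sum {n : ℕ} {A : Matrix (Fin n) (Fin n) ℝ}
    (b : OrthonormalBasis (Fin n) ℝ (EuclideanSpace ℝ (Fin n))) {lam : Fin n → ℝ}
    (heig : ∀ i, Matrix.toEuclideanLin A (b i) = lam i • b i) (c : ℝ)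
    (x : EuclideanSpace ℝ (Fin n)) :
    quadForm A x - c * ‖x‖ ^ 2 = ∑ i, (lam i - c) * ⟪b i, x⟫ ^ 2 :=
  b.inner_map_self_sub_mul_norm_sq heig c x

lemma inner_nonneg_of_inter_neg_ellipCone_eq {n : ℕ} [NeZero n]
    {K : Set (EuclideanSpace ℝ (Fin n))} {A : Matrix (Fin n) (Fin n) ℝ}
    (b : OrthonormalBasis (Fin n) ℝ (EuclideanSpace ℝ (Fin n))) {lam : Fin n → ℝ}
    (heig : ∀ i, Matrix.toEuclideanLin A (b i) = lam i • b i) (h01 : lam 0 < lam 1)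
    (hcop : ∀ x ∈ K, 0 ≤ quadForm (lam 1 • (1 : Matrix (Fin n) (Fin n) ℝ) - A) x)
    (hKL : K ∩ -ellipCone b (fun i => (lam i - lam 1) / (lam 1 - lam 0)) = {0})
    {x : EuclideanSpace ℝ (Fin n)} (hx : x ∈ K) : 0 ≤ ⟪b 0, x⟫ := by
  by_contra! hneg
  have hexp := quadForm_sub_mul_norm_sq_eq_sum b heig (lam 1) x
  rw [← Finset.add_sum_erase _ _ (Finset.mem_univ 0)] at hexp
  have hcopx := hcop x hx
  rw [quadForm_smul_one_sub] at hcopx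
  have hθ : ∑ i ∈ Finset.univ.erase 0, (lam i - lam 1) / (lam 1 - lam 0) * ⟪b i, x⟫ ^ 2
      ≤ ⟪b 0, x⟫ ^ 2 := by
    simp_rw [div_mul_eq_mul_div, ← Finset.sum_div]
    rw [div_le_iff₀ (sub_pos.2 h01)]
    linarith
  have hx0 : x ∈ K ∩ -ellipCone b _ := ⟨hx, neg_mem_neg_ellipCone _ _ hθ hneg.le⟩
  rw [hKL, Set.mem_singleton_iff] at hx0
  simp [hx0] at hneg

lemma convex_sublevel_of_inter_neg_ellipCone_eq {n : ℕ} [NeZero n]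
    {K : Set (EuclideanSpace ℝ (Fin n))} (hK : Convex ℝ K) {A : Matrix (Fin n) (Fin n) ℝ}
    (b : OrthonormalBasis (Fin n) ℝ (EuclideanSpace ℝ (Fin n))) {lam : Fin n → ℝ}
    (heig : ∀ i, Matrix.toEuclideanLin A (b i) = lam i • b i) (hmono : Monotone lam)
    (h01 : lam 0 < lam 1)
    (hcop : ∀ x ∈ K, 0 ≤ quadForm (lam 1 • (1 : Matrix (Fin n) (Fin n) ℝ) - A) x)
    (hKL : K ∩ -ellipCone b (fun i => (lam i - lam 1) / (lam 1 - lam 0)) = {0}) (c : ℝ) :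
    Convex ℝ (sublevel A K c) := by
  rcases le_total c (lam 1) with hc | hc
  · have hw : ∀ i ≠ 0, 0 ≤ lam i - c := fun i hi =>
      sub_nonneg.2 (hc.trans (hmono (Fin.one_le_of_ne_zero hi)))
    have hset : sublevel A K c = interior K ∩
        {x | ∑ i, (lam i - c) * innerₛₗ ℝ (b i) x ^ 2 ≤ 0 ∧ 0 ≤ innerₛₗ ℝ (b 0) x} := by
      ext x
      simp only [sublevel, Set.mem_inter_iff, Set.mem_ofPred_eq, innerₛₗ_apply_apply,
        ← quadForm_sub_mul_norm_sq_eq_sum b heig, sub_nonpos]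
      exact ⟨fun ⟨hx, hq⟩ => ⟨hx, hq, inner_nonneg_of_inter_neg_ellipCone_eq b heig h01 hcop hKL
        (interior_subset hx)⟩, fun ⟨hx, hq, _⟩ => ⟨hx, hq⟩⟩
    rw [hset]
    exact hK.interior.inter (convex_setOf_sum_mul_sq_nonpos hw _)
  · have hset : sublevel A K c = interior K := Set.sep_eq_self_iff_mem_true.2 fun x hx => by
      have hcopx := hcop x (interior_subset hx)
      rw [quadForm_smul_one_sub] at hcopx
      nlinarith [sq_nonneg ‖x‖]
    rw [hset]
    exact hK.interior

theorem stmt13_general (n : ℕ) [NeZero n]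
    (K : Set (EuclideanSpace ℝ (Fin n))) (hK : IsProperCone K)
    (A : Matrix (Fin n) (Fin n) ℝ)
    (v : Fin n → EuclideanSpace ℝ (Fin n)) (hv : Orthonormal ℝ v)
    (lam : Fin n → ℝ) (heig : ∀ i, Matrix.toEuclideanLin A (v i) = lam i • v i)
    (hmono : Monotone lam) (h12 : lam 0 < lam 1)
    (hcop : ∀ x ∈ K, 0 ≤ quadForm (lam 1 • (1 : Matrix (Fin n) (Fin n) ℝ) - A) x) :
    let L := ellipCone v (fun i => (lam i - lam 1) / (lam 1 - lam 0))
    (K ∩ -L = {0} ∨ K ∩ L = {0}) → ∀ c : ℝ, Convex ℝ (sublevel A K c) := by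
  intro L hL c
  obtain ⟨b, rfl⟩ : ∃ b : OrthonormalBasis (Fin n) ℝ (EuclideanSpace ℝ (Fin n)), ⇑b = v :=
    ⟨.mk hv (hv.linearIndependent.span_eq_top_of_card_eq_finrank (by simp)).ge,
      OrthonormalBasis.coe_mk _ _⟩
  have hconv : Convex ℝ K := hK.2.1
  rcases hL with hL | hL
  · exact convex_sublevel_of_inter_neg_ellipCone_eq hconv b heig hmono h12 hcop hL c
  · have hcop' : ∀ x ∈ -K, 0 ≤ quadForm (lam 1 • (1 : Matrix (Fin n) (Fin n) ℝ) - A) x :=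
      fun x hx => quadForm_neg _ x ▸ hcop (-x) hx
    have hL' : -K ∩ -L = {0} := by rw [← Set.inter_neg, hL, Set.neg_singleton, neg_zero]
    simpa [sublevel_neg] using
      (convex_sublevel_of_inter_neg_ellipCone_eq hconv.neg b heig hmono h12 hcop' hL' c).neg

/-- Corollary 4 of the paper: if `λ₂ ≤ (λ₁ + λ₃)/2`, `λ₂Iₙ - A` is `K`-copositive and
`K ∩ (-L_{λ₂}) = {0}` or `K ∩ L_{λ₂} = {0}`, then all sublevel sets `[φ_A ≤ c]` are
convex (i.e. `q_A` is spherically quasi-convex). -/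
theorem stmt13 (n : ℕ) [NeZero n] (hn : 3 ≤ n)
    (K : Set (EuclideanSpace ℝ (Fin n))) (hK : IsProperCone K) (hsub : K ⊆ dualCone K)
    (A : Matrix (Fin n) (Fin n) ℝ) (hA : A.IsSymm)
    (v : Fin n → EuclideanSpace ℝ (Fin n)) (hv : Orthonormal ℝ v)
    (lam : Fin n → ℝ) (heig : ∀ i, Matrix.toEuclideanLin A (v i) = lam i • v i)
    (hmono : Monotone lam) (h12 : lam 0 < lam 1)
    (h123 : lam 1 ≤ (lam 0 + lam 2) / 2)
    (hcop : ∀ x ∈ K, 0 ≤ quadForm (lam 1 • (1 : Matrix (Fin n) (Fin n) ℝ) - A) x) :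
    let L := ellipCone v (fun i => (lam i - lam 1) / (lam 1 - lam 0))
    (K ∩ -L = {0} ∨ K ∩ L = {0}) → ∀ c : ℝ, Convex ℝ (sublevel A K c) :=
  stmt13_general n K hK A v hv lam heig hmono h12 hcop
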